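/- arXiv:hep-th/0703152 — 7 statements merged into one kernel-verified Lean document; each statement's English description precedes it below -/
import Mathlib

section
/- The scalar potential for the multi-trace toy model, f(φ) = ξ φ^ω with ω > 2, ξ < 0, admits the power-law solution φ₋(x) = b |x|^{-c} of the sourceless gap equation -(l/2)^{2ν-1} (Γ(1-ν)/Γ(ν)) (-□)^ν φ₋ - f'(φ₋) = 0 on ℝ^d, where (-□)^ν acts on |x|^{-c(ω-1)} as (-□)^ν |x|^{-a} = 4^ν (Γ((a+2ν)/2) Γ((d-a)/2)) / (Γ(a/2) Γ((d-a-2ν)/2)) |x|^{-a-2ν} (valid for 0 < a < d - 2ν), provided c = 2ν/(ω-2) and b^{ω-2} = 2 l^{2ν-1} Γ(1-ν) Γ(d/2 - ν/(ω-2)) Γ((ω-1)ν/(ω-2)) / (ω |ξ| Γ(ν) Γ(ν/(ω-2)) Γ(d/2 - (ω-1)ν/(ω-2))). -/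
open Real

/-- For the deformation f(φ) = ξ φ^ω with ω > 2, ξ < 0, the power-law
profile φ₋(x) = b|x|^{-c} solves the sourceless gap equation
-(l/2)^{2ν-1} (Γ(1-ν)/Γ(ν)) (-□)^ν φ₋ - f'(φ₋) = 0 on ℝ^d, where the fractional
Laplacian L = (-□)^ν acts on powers by
L |x|^{-a} = 4^ν Γ((a+2ν)/2)Γ((d-a)/2)/(Γ(a/2)Γ((d-a-2ν)/2)) |x|^{-a-2ν}
for 0 < a < d - 2ν, provided c = 2ν/(ω-2) and
b^{ω-2} = 2 l^{2ν-1} Γ(1-ν) Γ(d/2-ν/(ω-2)) Γ((ω-1)ν/(ω-2)) /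
          (ω|ξ| Γ(ν) Γ(ν/(ω-2)) Γ(d/2-(ω-1)ν/(ω-2))). -/
theorem stmt4 (d : ℕ) (hd : 0 < d) (ν ω ξ l b c : ℝ)
    (hν : 0 < ν) (hν1 : ν < 1) (hω : 2 < ω) (hξ : ξ < 0) (hl : 0 < l)
    (L : (EuclideanSpace ℝ (Fin d) → ℝ) → (EuclideanSpace ℝ (Fin d) → ℝ))
    (hLpow : ∀ a : ℝ, 0 < a → a < (d : ℝ) - 2 * ν →
      ∀ x : EuclideanSpace ℝ (Fin d), x ≠ 0 →
        L (fun y => ‖y‖ ^ (-a)) x =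
          (4 : ℝ) ^ ν * (Real.Gamma ((a + 2 * ν) / 2) * Real.Gamma (((d : ℝ) - a) / 2)) /
            (Real.Gamma (a / 2) * Real.Gamma (((d : ℝ) - a - 2 * ν) / 2)) *
            ‖x‖ ^ (-a - 2 * ν))
    (hLsmul : ∀ (t : ℝ) (g : EuclideanSpace ℝ (Fin d) → ℝ) (x : EuclideanSpace ℝ (Fin d)),
      L (fun y => t * g y) x = t * L g x)
    (hc : c = 2 * ν / (ω - 2)) (hcdom : 0 < c ∧ c < (d : ℝ) - 2 * ν)
    (hb : 0 < b)
    (hbval : b ^ (ω - 2) =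
      2 * l ^ (2 * ν - 1) * Real.Gamma (1 - ν) * Real.Gamma ((d : ℝ) / 2 - ν / (ω - 2)) *
        Real.Gamma ((ω - 1) * ν / (ω - 2)) /
      (ω * |ξ| * Real.Gamma ν * Real.Gamma (ν / (ω - 2)) *
        Real.Gamma ((d : ℝ) / 2 - (ω - 1) * ν / (ω - 2)))) :
    ∀ x : EuclideanSpace ℝ (Fin d), x ≠ 0 →
      -(l / 2) ^ (2 * ν - 1) * (Real.Gamma (1 - ν) / Real.Gamma ν) *
          L (fun y => b * ‖y‖ ^ (-c)) x -
        ξ * ω * (b * ‖x‖ ^ (-c)) ^ (ω - 1) = 0 := by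

  intro x hx
  have hω2 : (0:ℝ) < ω - 2 := by linarith
  have hω2' : (ω - 2) ≠ 0 := ne_of_gt hω2
  have hxn : (0:ℝ) ≤ ‖x‖ := norm_nonneg x
  rw [hLsmul, hLpow c hcdom.1 hcdom.2 x hx]
  have e1 : (c + 2*ν)/2 = (ω-1)*ν/(ω-2) := by rw [hc]; field_simp; ring
  have e2 : c/2 = ν/(ω-2) := by rw [hc]; ring
  have e3 : ((d:ℝ) - c)/2 = (d:ℝ)/2 - ν/(ω-2) := by rw [hc]; ring
  have e4 : ((d:ℝ) - c - 2*ν)/2 = (d:ℝ)/2 - (ω-1)*ν/(ω-2) := by rw [hc]; field_simp; ring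
  rw [e1, e2, e3, e4]
  have hrc : (0:ℝ) ≤ ‖x‖ ^ (-c) := Real.rpow_nonneg hxn _
  have h5 : (-c)*(ω-1) = -c - 2*ν := by rw [hc]; field_simp; ring
  have hpow : (b * ‖x‖ ^ (-c)) ^ (ω - 1) = b ^ (ω-2) * b * ‖x‖ ^ (-c - 2*ν) := by
    rw [Real.mul_rpow hb.le hrc, ← Real.rpow_mul hxn, h5,
      show ω - 1 = (ω-2)+1 by ring, Real.rpow_add hb, Real.rpow_one]
  rw [hpow, hbval]
  have hF : (0:ℝ) < (4:ℝ)^ν := Real.rpow_pos_of_pos (by norm_num) _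
  have hQ : (l/2)^(2*ν-1) = 2*l^(2*ν-1)/(4:ℝ)^ν := by
    rw [eq_div_iff (ne_of_gt hF)]
    have h1 : (l/2)^(2*ν-1) = l^(2*ν-1) / (2:ℝ)^(2*ν-1) :=
      Real.div_rpow hl.le (by norm_num) _
    have h2 : (4:ℝ)^ν = (2:ℝ)^(2*ν) := by
      rw [show (4:ℝ) = 2^(2:ℝ) by rw [Real.rpow_two]; norm_num,
        ← Real.rpow_mul (by norm_num)]
    have h3 : (2:ℝ)^(2*ν) = (2:ℝ)^(2*ν-1) * 2 := by
      rw [← Real.rpow_add_one (by norm_num : (2:ℝ) ≠ 0) (2*ν-1)]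
      norm_num
    have h6 : (0:ℝ) < (2:ℝ)^(2*ν-1) := Real.rpow_pos_of_pos (by norm_num) _
    rw [h1, h2, h3]
    field_simp [h6.ne']
  have hGν : (0:ℝ) < Real.Gamma ν := Real.Gamma_pos_of_pos hν
  have hGc : (0:ℝ) < Real.Gamma (ν/(ω-2)) :=
    Real.Gamma_pos_of_pos (div_pos hν hω2)
  have hGd : (0:ℝ) < Real.Gamma ((d:ℝ)/2 - (ω-1)*ν/(ω-2)) := by
    apply Real.Gamma_pos_of_pos
    rw [← e4]
    linarith [hcdom.2]
  have hωne : ω ≠ 0 := by linarith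
  have hξne : ξ ≠ 0 := ne_of_lt hξ
  rw [hQ, abs_of_neg hξ, sub_eq_zero]
  set A1 := Real.Gamma (1 - ν) with hA1
  set A2 := Real.Gamma ν with hA2
  set A3 := Real.Gamma ((ω-1)*ν/(ω-2)) with hA3
  set A4 := Real.Gamma ((d:ℝ)/2 - ν/(ω-2)) with hA4
  set A5 := Real.Gamma (ν/(ω-2)) with hA5
  set A6 := Real.Gamma ((d:ℝ)/2 - (ω-1)*ν/(ω-2)) with hA6
  set F := (4:ℝ)^ν with hFdef
  set P := l^(2*ν-1) with hPdef
  set X := ‖x‖^(-c-2*ν) with hXdef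
  field_simp [hF.ne', hGν.ne', hGc.ne', hGd.ne', hωne, hξne]
end

section
/- Let V(φ) = -(d(d-1)/(2κ²l²)) cosh((2/3)√(dκ²/(d-1)) φ). Then for every ν ≥ -1, the function W(φ;ν) = -((d-1)/(κ²l)) (1-ρ²)^{-3/4} (1-ρ² + √(1+2νρ+ρ²)) / √(2(1+νρ+√(1+2νρ+ρ²))), where ρ = tanh((2/3)√(dκ²/(d-1)) φ), satisfies the fake superpotential equation V(φ) = (1/2)(W'(φ)² - (dκ²/(d-1)) W(φ)²) on the domain where 1+2νρ+ρ² > 0. -/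
/-!
Write `W = -C f(ρ)` with `ρ = tanh (c φ)`, `C = (d-1)/(κ²l)` and `c² = (4/9) dκ²/(d-1)`.
Since `dρ/dφ = c (1 - ρ²)` and `cosh (c φ) = (1 - ρ²)^(-1/2)`, the fake superpotential equation
becomes the ODE `((2/3)(1 - ρ²) f')² - f² = -(1 - ρ²)^(-1/2)`, with no trace of `d`, `κ`, `l`.
With `s = √(1 + 2νρ + ρ²)` and `t = √(2(1 + νρ + s))` one finds `f' = (3/2) ρ (1 - ρ²)^(-7/4) s / t`,
and the ODE reduces to `ρ² s² - (1 - ρ² + s)² = -(1 - ρ²) t²`, a consequence of the defining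
relations `s² = 1 + 2νρ + ρ²` and `t² = 2(1 + νρ + s)`.
-/

open Real

theorem Real.one_sub_tanh_sq (x : ℝ) : 1 - tanh x ^ 2 = (cosh x ^ 2)⁻¹ := by
  have := cosh_sq x
  rw [tanh_eq_sinh_div_cosh]
  field_simp
  linarith

theorem Real.hasDerivAt_tanh (x : ℝ) : HasDerivAt tanh (1 - tanh x ^ 2) x := by
  have h := (hasDerivAt_sinh x).div (hasDerivAt_cosh x) (cosh_pos x).ne'
  have hfun : sinh / cosh = tanh := funext fun y => (tanh_eq_sinh_div_cosh y).symm
  rw [hfun] at h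
  refine h.congr_deriv ?_
  have := cosh_sq_sub_sinh_sq x
  rw [one_sub_tanh_sq]
  field_simp
  linarith

theorem Real.cosh_eq_one_sub_tanh_sq_rpow (x : ℝ) :
    cosh x = (1 - tanh x ^ 2) ^ (-(1 : ℝ) / 2) := by
  rw [one_sub_tanh_sq, inv_rpow (by positivity), ← rpow_neg (by positivity), neg_div, neg_neg,
    ← sqrt_eq_rpow, sqrt_sq (cosh_pos x).le]

/-- `W φ = -((d - 1) / (κ ^ 2 * l)) * fakeProfile ν (ρ φ)`. -/
noncomputable def fakeProfile (ν x : ℝ) : ℝ :=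
  (1 - x ^ 2) ^ (-(3 : ℝ) / 4) * (1 - x ^ 2 + √(1 + 2 * ν * x + x ^ 2)) /
    √(2 * (1 + ν * x + √(1 + 2 * ν * x + x ^ 2)))

section fakeProfile

variable {ν x : ℝ}

theorem one_add_mul_add_sqrt_pos (hx : x ^ 2 < 1) (h : 0 < 1 + 2 * ν * x + x ^ 2) :
    0 < 1 + ν * x + √(1 + 2 * ν * x + x ^ 2) := by
  have : 0 < 1 + ν * x := by linarith
  positivity

theorem hasDerivAt_fakeProfile (hx : x ^ 2 < 1) (h : 0 < 1 + 2 * ν * x + x ^ 2) :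
    HasDerivAt (fakeProfile ν)
      (3 / 2 * x * (1 - x ^ 2) ^ (-(7 : ℝ) / 4) * √(1 + 2 * ν * x + x ^ 2) /
        √(2 * (1 + ν * x + √(1 + 2 * ν * x + x ^ 2)))) x := by
  have hp : 0 < 1 - x ^ 2 := by linarith
  have hu : 0 < 2 * (1 + ν * x + √(1 + 2 * ν * x + x ^ 2)) :=
    mul_pos two_pos (one_add_mul_add_sqrt_pos hx h)
  have hP : HasDerivAt (fun y : ℝ => 1 - y ^ 2) (-(2 * x)) x := by
    simpa using (hasDerivAt_pow 2 x).const_sub 1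
  have hS : HasDerivAt (fun y : ℝ => √(1 + 2 * ν * y + y ^ 2))
      ((2 * ν + 2 * x) / (2 * √(1 + 2 * ν * x + x ^ 2))) x := by
    refine HasDerivAt.sqrt ?_ h.ne'
    simpa using (((hasDerivAt_id x).const_mul (2 * ν)).const_add 1).fun_add (hasDerivAt_pow 2 x)
  have hT : HasDerivAt (fun y : ℝ => √(2 * (1 + ν * y + √(1 + 2 * ν * y + y ^ 2))))
      (2 * (ν + (2 * ν + 2 * x) / (2 * √(1 + 2 * ν * x + x ^ 2))) /
        (2 * √(2 * (1 + ν * x + √(1 + 2 * ν * x + x ^ 2))))) x := by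
    refine HasDerivAt.sqrt ?_ hu.ne'
    simpa using ((((hasDerivAt_id x).const_mul ν).const_add 1).fun_add hS).const_mul 2
  refine (((hP.rpow_const (p := -(3 : ℝ) / 4) (Or.inl hp.ne')).fun_mul (hP.fun_add hS)).fun_div
    hT (sqrt_pos.mpr hu).ne').congr_deriv ?_
  have h7 : (-(7 : ℝ) / 4) = -(3 : ℝ) / 4 - 1 := by norm_num
  rw [h7, rpow_sub_one hp.ne']
  set s := √(1 + 2 * ν * x + x ^ 2)
  set t := √(2 * (1 + ν * x + s))
  have hs2 : s ^ 2 = 1 + 2 * ν * x + x ^ 2 := sq_sqrt h.le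
  have ht2 : t ^ 2 = 2 * (1 + ν * x + s) := sq_sqrt hu.le
  have hspos : 0 < s := sqrt_pos.mpr h
  have htpos : 0 < t := sqrt_pos.mpr hu
  field_simp
  linear_combination 4 * (1 - x ^ 2) * (2 * ν + 2 * x - x * s) * ht2 -
    8 * (1 - x ^ 2) * (x + ν) * hs2

theorem fakeProfile_ode (hx : x ^ 2 < 1) (h : 0 < 1 + 2 * ν * x + x ^ 2) :
    (2 / 3 * (1 - x ^ 2) * deriv (fakeProfile ν) x) ^ 2 - fakeProfile ν x ^ 2 =
      -(1 - x ^ 2) ^ (-(1 : ℝ) / 2) := by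
  have hp : 0 < 1 - x ^ 2 := by linarith
  have hu : 0 < 2 * (1 + ν * x + √(1 + 2 * ν * x + x ^ 2)) :=
    mul_pos two_pos (one_add_mul_add_sqrt_pos hx h)
  have h7 : (1 - x ^ 2) ^ (-(7 : ℝ) / 4) = (1 - x ^ 2) ^ (-(3 : ℝ) / 4) / (1 - x ^ 2) := by
    rw [← rpow_sub_one hp.ne']
    norm_num
  have h1 : (1 - x ^ 2) ^ (-(1 : ℝ) / 2) = ((1 - x ^ 2) ^ (-(3 : ℝ) / 4)) ^ 2 * (1 - x ^ 2) := by
    rw [← rpow_natCast ((1 - x ^ 2) ^ (-(3 : ℝ) / 4)) 2, ← rpow_mul hp.le, ← rpow_add_one hp.ne']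
    norm_num
  rw [(hasDerivAt_fakeProfile hx h).deriv, fakeProfile, h7, h1]
  set s := √(1 + 2 * ν * x + x ^ 2)
  set t := √(2 * (1 + ν * x + s))
  have hs2 : s ^ 2 = 1 + 2 * ν * x + x ^ 2 := sq_sqrt h.le
  have ht2 : t ^ 2 = 2 * (1 + ν * x + s) := sq_sqrt hu.le
  have htpos : 0 < t := sqrt_pos.mpr hu
  field_simp
  linear_combination (x ^ 2 - 1) * hs2 + (1 - x ^ 2) * ht2

end fakeProfile

theorem half_deriv_sq_sub_sq_eq_neg_cosh {f : ℝ → ℝ} {K c C φ : ℝ} (hc : c ^ 2 = 4 / 9 * K)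
    (hf : DifferentiableAt ℝ f (tanh (c * φ)))
    (hode : (2 / 3 * (1 - tanh (c * φ) ^ 2) * deriv f (tanh (c * φ))) ^ 2 -
      f (tanh (c * φ)) ^ 2 = -(1 - tanh (c * φ) ^ 2) ^ (-(1 : ℝ) / 2)) :
    1 / 2 * (deriv (fun ψ => -C * f (tanh (c * ψ))) φ ^ 2 - K * (-C * f (tanh (c * φ))) ^ 2) =
      -(K * C ^ 2 / 2) * cosh (c * φ) := by
  have hW : HasDerivAt (fun ψ => -C * f (tanh (c * ψ)))
      (-C * (deriv f (tanh (c * φ)) * ((1 - tanh (c * φ) ^ 2) * c))) φ := by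
    have hlin : HasDerivAt (fun ψ => c * ψ) c φ := by simpa using (hasDerivAt_id φ).const_mul c
    exact (hf.hasDerivAt.comp φ ((hasDerivAt_tanh _).comp φ hlin)).const_mul (-C)
  rw [hW.deriv, cosh_eq_one_sub_tanh_sq_rpow]
  linear_combination (K * C ^ 2 / 2) * hode +
    (C ^ 2 * (1 - tanh (c * φ) ^ 2) ^ 2 * deriv f (tanh (c * φ)) ^ 2 / 2) * hc

theorem stmt6_general (d κ l ν : ℝ) (hd : 1 < d) (hκ : 0 < κ) (hl : 0 < l)
    (V W ρ : ℝ → ℝ)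
    (hρ : ∀ φ, ρ φ = Real.tanh ((2 / 3) * Real.sqrt (d * κ ^ 2 / (d - 1)) * φ))
    (hV : ∀ φ, V φ = -(d * (d - 1) / (2 * κ ^ 2 * l ^ 2)) *
      Real.cosh ((2 / 3) * Real.sqrt (d * κ ^ 2 / (d - 1)) * φ))
    (hW : ∀ φ, W φ = -((d - 1) / (κ ^ 2 * l)) * (1 - ρ φ ^ 2) ^ (-(3 : ℝ) / 4) *
      (1 - ρ φ ^ 2 + Real.sqrt (1 + 2 * ν * ρ φ + ρ φ ^ 2)) /
      Real.sqrt (2 * (1 + ν * ρ φ + Real.sqrt (1 + 2 * ν * ρ φ + ρ φ ^ 2)))) :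
    ∀ φ : ℝ, 0 < 1 + 2 * ν * ρ φ + ρ φ ^ 2 →
      V φ = (1 / 2) * ((deriv W φ) ^ 2 - (d * κ ^ 2 / (d - 1)) * (W φ) ^ 2) := by
  intro φ hpos
  have hK : 0 ≤ d * κ ^ 2 / (d - 1) := div_nonneg (by positivity) (by linarith)
  set c := 2 / 3 * √(d * κ ^ 2 / (d - 1))
  have hc : c ^ 2 = 4 / 9 * (d * κ ^ 2 / (d - 1)) := by rw [mul_pow, sq_sqrt hK]; norm_num
  have hWc : W = fun ψ => -((d - 1) / (κ ^ 2 * l)) * fakeProfile ν (tanh (c * ψ)) := by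
    funext ψ
    rw [hW, hρ, fakeProfile]
    ring
  rw [hρ] at hpos
  have hx := tanh_sq_lt_one (c * φ)
  rw [hV, hWc, half_deriv_sq_sub_sq_eq_neg_cosh hc
    (hasDerivAt_fakeProfile hx hpos).differentiableAt (fakeProfile_ode hx hpos)]
  have : d - 1 ≠ 0 := by linarith
  field_simp

/-- For the '2/3' potential
V(φ) = -(d(d-1)/(2κ²l²)) cosh((2/3)√(dκ²/(d-1)) φ), and for every ν ≥ -1, the
fake superpotential
W(φ) = -((d-1)/(κ²l)) (1-ρ²)^{-3/4}(1-ρ²+√(1+2νρ+ρ²))/√(2(1+νρ+√(1+2νρ+ρ²))),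
ρ = tanh((2/3)√(dκ²/(d-1)) φ), satisfies V = (1/2)(W'² - (dκ²/(d-1)) W²)
wherever 1+2νρ+ρ² > 0. -/
theorem stmt6 (d κ l ν : ℝ) (hd : 1 < d) (hκ : 0 < κ) (hl : 0 < l) (hν : -1 ≤ ν)
    (V W ρ : ℝ → ℝ)
    (hρ : ∀ φ, ρ φ = Real.tanh ((2 / 3) * Real.sqrt (d * κ ^ 2 / (d - 1)) * φ))
    (hV : ∀ φ, V φ = -(d * (d - 1) / (2 * κ ^ 2 * l ^ 2)) *
      Real.cosh ((2 / 3) * Real.sqrt (d * κ ^ 2 / (d - 1)) * φ))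
    (hW : ∀ φ, W φ = -((d - 1) / (κ ^ 2 * l)) * (1 - ρ φ ^ 2) ^ (-(3 : ℝ) / 4) *
      (1 - ρ φ ^ 2 + Real.sqrt (1 + 2 * ν * ρ φ + ρ φ ^ 2)) /
      Real.sqrt (2 * (1 + ν * ρ φ + Real.sqrt (1 + 2 * ν * ρ φ + ρ φ ^ 2)))) :
    ∀ φ : ℝ, 0 < 1 + 2 * ν * ρ φ + ρ φ ^ 2 →
      V φ = (1 / 2) * ((deriv W φ) ^ 2 - (d * κ ^ 2 / (d - 1)) * (W φ) ^ 2) :=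
  stmt6_general d κ l ν hd hκ hl V W ρ hρ hV hW
end

section
/- Let W(φ;ξ) = -((d-1)/(κ²l)) + (±((d-1)/(2d))√λ + ξ(1 ∓ (2l√λ/(d-1)) φ^{2/(d-1)})^{-d}) φ^{2d/(d-1)}. Then W satisfies, to first order in ξ, the conformal fake-superpotential equation W'² - (κ²/(d(d-1)))(dW - ((d-1)/2) φ W')² = -d(d-1)/(κ²l²) + λ φ^{2(d+1)/(d-1)}; i.e., the ξ⁰ term is an exact solution and the ξ¹ term solves the linearized equation around it. -/
open Real

/-- The family
W(φ;ξ) = -((d-1)/(κ²l)) + (s((d-1)/(2d))√λ + ξ(1 - s(2l√λ/(d-1))φ^{2/(d-1)})^{-d}) φ^{2d/(d-1)}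
(with sign s = ±1) satisfies, to first order in ξ, the conformal fake-superpotential
equation W'² - (κ²/(d(d-1)))(dW - ((d-1)/2)φW')² = -d(d-1)/(κ²l²) + λφ^{2(d+1)/(d-1)}:
the ξ⁰ term W₀ is an exact solution and the ξ¹ term W₁ solves the linearized equation. -/
theorem stmt10 (d κ l lam s : ℝ) (hd : 1 < d) (hκ : 0 < κ) (hl : 0 < l)
    (hlam : 0 < lam) (hs : s = 1 ∨ s = -1)
    (W0 W1 : ℝ → ℝ)
    (hW0 : ∀ φ : ℝ, 0 < φ → W0 φ = -((d - 1) / (κ ^ 2 * l)) +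
      s * ((d - 1) / (2 * d)) * Real.sqrt lam * φ ^ (2 * d / (d - 1)))
    (hW1 : ∀ φ : ℝ, 0 < φ → W1 φ =
      (1 - s * (2 * l * Real.sqrt lam / (d - 1)) * φ ^ (2 / (d - 1))) ^ (-d) *
        φ ^ (2 * d / (d - 1))) :
    ∀ φ : ℝ, 0 < φ →
      0 < 1 - s * (2 * l * Real.sqrt lam / (d - 1)) * φ ^ (2 / (d - 1)) →
      ((deriv W0 φ) ^ 2 - (κ ^ 2 / (d * (d - 1))) *
          (d * W0 φ - ((d - 1) / 2) * φ * deriv W0 φ) ^ 2 =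
        -(d * (d - 1)) / (κ ^ 2 * l ^ 2) + lam * φ ^ (2 * (d + 1) / (d - 1))) ∧
      (2 * deriv W0 φ * deriv W1 φ - (2 * κ ^ 2 / (d * (d - 1))) *
          (d * W0 φ - ((d - 1) / 2) * φ * deriv W0 φ) *
          (d * W1 φ - ((d - 1) / 2) * φ * deriv W1 φ) = 0) := by
  intro φ hφ hu
  have hd0 : d ≠ 0 := by linarith
  have hd1 : d - 1 ≠ 0 := by linarith
  set r := Real.sqrt lam with hrdef
  have hrr : r * r = lam := Real.mul_self_sqrt hlam.le
  have hsq : s * s = 1 := by rcases hs with h | h <;> rw [h] <;> norm_num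
  set q : ℝ := 2 / (d - 1) with hqdef
  set p : ℝ := 2 * d / (d - 1) with hpdef
  set c : ℝ := s * (2 * l * r / (d - 1)) with hcdef
  set t : ℝ := φ ^ q with htdef
  -- u positivity
  have hupos : 0 < 1 - c * t := hu
  have hune : 1 - c * t ≠ 0 := ne_of_gt hupos
  -- rpow identities
  have hA : φ ^ p = t * (φ * φ) := by
    rw [show p = q + 1 + 1 by rw [hpdef, hqdef]; field_simp; ring,
      Real.rpow_add hφ, Real.rpow_add hφ, Real.rpow_one, htdef]
    ring
  have hB : φ ^ (p - 1) = t * φ := by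
    rw [show p - 1 = q + 1 by rw [hpdef, hqdef]; field_simp; ring,
      Real.rpow_add hφ, Real.rpow_one, htdef]
  have hq1 : φ ^ (q - 1) = t / φ := by
    rw [Real.rpow_sub hφ, Real.rpow_one, htdef]
  have hT : φ ^ (2 * (d + 1) / (d - 1)) = t * t * (φ * φ) := by
    rw [show 2 * (d + 1) / (d - 1) = q + q + 1 + 1 by rw [hqdef]; field_simp; ring,
      Real.rpow_add hφ, Real.rpow_add hφ, Real.rpow_add hφ, Real.rpow_one, htdef]
    ring
  have hV : (1 - c * t) ^ (-d) = (1 - c * t) ^ (-d - 1) * (1 - c * t) := by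
    have h := Real.rpow_add hupos (-d - 1) 1
    rw [Real.rpow_one, show -d - 1 + 1 = -d by ring] at h
    exact h
  -- derivative of W0
  have hmem : Set.Ioi (0 : ℝ) ∈ nhds φ := isOpen_Ioi.mem_nhds hφ
  have hev0 : W0 =ᶠ[nhds φ]
      fun x => -((d - 1) / (κ ^ 2 * l)) + s * ((d - 1) / (2 * d)) * r * x ^ p := by
    filter_upwards [hmem] with x hx
    exact hW0 x hx
  have hder0 : HasDerivAt
      (fun x : ℝ => -((d - 1) / (κ ^ 2 * l)) + s * ((d - 1) / (2 * d)) * r * x ^ p)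
      (s * ((d - 1) / (2 * d)) * r * (p * φ ^ (p - 1))) φ := by
    exact (((Real.hasDerivAt_rpow_const (x := φ) (p := p)
      (Or.inl hφ.ne'))).const_mul _).const_add _
  have E0 : deriv W0 φ = s * r * (t * φ) := by
    rw [hev0.deriv_eq, hder0.deriv, hB, hpdef]
    field_simp
  have EX : d * W0 φ - (d - 1) / 2 * φ * deriv W0 φ = -(d * (d - 1) / (κ ^ 2 * l)) := by
    rw [hW0 φ hφ, E0, hA]
    field_simp
    ring
  -- derivative of W1
  have hev1 : W1 =ᶠ[nhds φ] fun x => (1 - c * x ^ q) ^ (-d) * x ^ p := by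
    filter_upwards [hmem] with x hx
    exact hW1 x hx
  have hg : HasDerivAt (fun x : ℝ => 1 - c * x ^ q) (-(c * (q * φ ^ (q - 1)))) φ := by
    exact (((Real.hasDerivAt_rpow_const (x := φ) (p := q)
      (Or.inl hφ.ne'))).const_mul c).const_sub 1
  have hgd : HasDerivAt (fun x : ℝ => (1 - c * x ^ q) ^ (-d))
      (-(c * (q * φ ^ (q - 1))) * (-d) * (1 - c * φ ^ q) ^ (-d - 1)) φ :=
    hg.rpow_const (Or.inl hune)
  have hder1 : HasDerivAt (fun x : ℝ => (1 - c * x ^ q) ^ (-d) * x ^ p)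
      ((-(c * (q * φ ^ (q - 1))) * (-d) * (1 - c * φ ^ q) ^ (-d - 1)) * φ ^ p
        + (1 - c * φ ^ q) ^ (-d) * (p * φ ^ (p - 1))) φ :=
    hgd.mul (Real.hasDerivAt_rpow_const (x := φ) (p := p) (Or.inl hφ.ne'))
  have E1 : deriv W1 φ =
      d * c * q * ((1 - c * t) ^ (-d - 1)) * (t * t * φ)
        + p * ((1 - c * t) * ((1 - c * t) ^ (-d - 1))) * (t * φ) := by
    rw [hev1.deriv_eq, hder1.deriv, hA, hB, hq1, hV, ← htdef]
    field_simp
  have EY : d * W1 φ - (d - 1) / 2 * φ * deriv W1 φ =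
      -(d * c * ((1 - c * t) ^ (-d - 1)) * (t * t) * (φ * φ)) := by
    rw [hW1 φ hφ, E1, hA, hV, hpdef, hqdef]
    field_simp
    ring
  constructor
  · rw [EX, E0, hT]
    have hSQ : (s * r * (t * φ)) ^ 2 = lam * (t * t * (φ * φ)) := by
      linear_combination (r * r * (t * t * (φ * φ))) * hsq + (t * t * (φ * φ)) * hrr
    rw [hSQ]
    field_simp
    ring
  · rw [EX, EY, E0, E1, hpdef, hqdef, hcdef]
    field_simp
    ring
end

section
/- The pair of functions π_A(A,φ) = -(d(d-1)/(κ²l)) e^{dA} √(1 + k e^{-2A} + μ e^{-(d+1)A}) + ((d-1)/2) φ π_φ and π_φ(A,φ) = e^{dA} √((d(d-1)/(κ²l²)) μ e^{-(d+1)A} + k ((d-1)/(2l))² φ² e^{-2A} + λ φ^{2(d+1)/(d-1)}) satisfies the integrability condition ∂π_A/∂φ = ∂π_φ/∂A on the domain where both square roots have positive arguments. -/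
/-!
Write `π_φ = e^{dA} √Q`. Every term of `Q` has the form `c e^{αA} φ^β` with
`(d - 1) β / 2 - α = d + 1`, so `Q` satisfies the weighted Euler identity
`(d - 1)/2 · φ ∂_φ Q - ∂_A Q = (d + 1) Q`. Multiplying both sides of
`∂_φ π_A = ∂_A π_φ` by `2 e^{-dA} √Q` turns the integrability condition into exactly this identity.
-/

open Real

/-- The radicand of `π_φ`, with `a = d(d-1)μ/(κ²l²)` and `b = k((d-1)/(2l))²`. -/
noncomputable def hjRadicand (d a b lam A φ : ℝ) : ℝ :=
  a * exp (-(d + 1) * A) + b * φ ^ 2 * exp (-2 * A) + lam * φ ^ (2 * (d + 1) / (d - 1))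

lemma hasDerivAt_hjRadicand_field (d a b lam A : ℝ) {φ : ℝ} (hφ : 0 < φ) :
    HasDerivAt (hjRadicand d a b lam A)
      (2 * b * φ * exp (-2 * A) +
        lam * (2 * (d + 1) / (d - 1)) * φ ^ (2 * (d + 1) / (d - 1) - 1)) φ := by
  have h : HasDerivAt (hjRadicand d a b lam A) _ φ :=
    ((hasDerivAt_const φ (a * exp (-(d + 1) * A))).add
      (((hasDerivAt_pow 2 φ).const_mul b).mul_const (exp (-2 * A)))).add
      ((hasDerivAt_rpow_const (p := 2 * (d + 1) / (d - 1)) (Or.inl hφ.ne')).const_mul lam)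
  convert h using 1
  push_cast
  ring

lemma hasDerivAt_hjRadicand_scale (d a b lam φ A : ℝ) :
    HasDerivAt (fun A' => hjRadicand d a b lam A' φ)
      (-(d + 1) * a * exp (-(d + 1) * A) - 2 * b * φ ^ 2 * exp (-2 * A)) A := by
  have h : HasDerivAt (fun A' => hjRadicand d a b lam A' φ) _ A :=
    ((((hasDerivAt_id A).const_mul (-(d + 1))).exp.const_mul a).add
      (((hasDerivAt_id A).const_mul (-2 : ℝ)).exp.const_mul (b * φ ^ 2))).add
      (hasDerivAt_const A (lam * φ ^ (2 * (d + 1) / (d - 1))))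
  convert h using 1
  simp only [id_eq]
  ring

lemma hjRadicand_euler {d : ℝ} (hd : d ≠ 1) (a b lam A : ℝ) {φ : ℝ} (hφ : 0 < φ) :
    (d - 1) / 2 * φ * (2 * b * φ * exp (-2 * A) +
        lam * (2 * (d + 1) / (d - 1)) * φ ^ (2 * (d + 1) / (d - 1) - 1)) -
      (-(d + 1) * a * exp (-(d + 1) * A) - 2 * b * φ ^ 2 * exp (-2 * A)) =
      (d + 1) * hjRadicand d a b lam A φ := by
  have hd1 : d - 1 ≠ 0 := sub_ne_zero.mpr hd
  have hpow : φ * φ ^ (2 * (d + 1) / (d - 1) - 1) = φ ^ (2 * (d + 1) / (d - 1)) := by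
    rw [rpow_sub_one hφ.ne', mul_div_cancel₀ _ hφ.ne']
  unfold hjRadicand
  rw [← hpow]
  field_simp
  ring

lemma deriv_const_add_mul_exp_sqrt_eq {d C A φ Qφ QA : ℝ} {f g : ℝ → ℝ}
    (hf : HasDerivAt f Qφ φ) (hg : HasDerivAt g QA A) (hfg : f φ = g A) (hQ : 0 < g A)
    (heuler : (d - 1) / 2 * φ * Qφ - QA = (d + 1) * g A) :
    deriv (fun φ' => C + (d - 1) / 2 * φ' * (exp (d * A) * √(f φ'))) φ =
      deriv (fun A' => exp (d * A') * √(g A')) A := by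
  have hfφ : 0 < f φ := hfg ▸ hQ
  have hφ : HasDerivAt (fun φ' => C + (d - 1) / 2 * φ' * (exp (d * A) * √(f φ'))) _ φ :=
    (hasDerivAt_const φ C).add (((hasDerivAt_id φ).const_mul ((d - 1) / 2)).mul
      ((hf.sqrt hfφ.ne').const_mul (exp (d * A))))
  have hA : HasDerivAt (fun A' => exp (d * A') * √(g A')) _ A :=
    ((hasDerivAt_id A).const_mul d).exp.mul (hg.sqrt hQ.ne')
  rw [hφ.deriv, hA.deriv, hfg]
  have hs : √(g A) ^ 2 = g A := sq_sqrt hQ.le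
  have hs0 : √(g A) ≠ 0 := (sqrt_pos.mpr hQ).ne'
  simp only [id_eq]
  field_simp
  linear_combination 2 * exp (d * A) * heuler - 2 * (d + 1) * exp (d * A) * hs

theorem stmt11_general (d κ l lam μ k : ℝ) (hd : 1 < d)
    (πA πφ : ℝ → ℝ → ℝ)
    (hπφ : ∀ A φ : ℝ, πφ A φ = Real.exp (d * A) *
      Real.sqrt ((d * (d - 1) / (κ ^ 2 * l ^ 2)) * μ * Real.exp (-(d + 1) * A) +
        k * ((d - 1) / (2 * l)) ^ 2 * φ ^ 2 * Real.exp (-2 * A) +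
        lam * φ ^ (2 * (d + 1) / (d - 1))))
    (hπA : ∀ A φ : ℝ, πA A φ = -(d * (d - 1) / (κ ^ 2 * l)) * Real.exp (d * A) *
      Real.sqrt (1 + k * Real.exp (-2 * A) + μ * Real.exp (-(d + 1) * A)) +
      ((d - 1) / 2) * φ * πφ A φ) :
    ∀ A φ : ℝ, 0 < φ →
      0 < 1 + k * Real.exp (-2 * A) + μ * Real.exp (-(d + 1) * A) →
      0 < (d * (d - 1) / (κ ^ 2 * l ^ 2)) * μ * Real.exp (-(d + 1) * A) +
          k * ((d - 1) / (2 * l)) ^ 2 * φ ^ 2 * Real.exp (-2 * A) +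
          lam * φ ^ (2 * (d + 1) / (d - 1)) →
      deriv (fun φ' => πA A φ') φ = deriv (fun A' => πφ A' φ) A := by
  intro A φ hφ _ hQ
  set a := d * (d - 1) / (κ ^ 2 * l ^ 2) * μ
  set b := k * ((d - 1) / (2 * l)) ^ 2
  simp only [hπA, hπφ]
  exact deriv_const_add_mul_exp_sqrt_eq (f := hjRadicand d a b lam A)
    (g := fun A' => hjRadicand d a b lam A' φ) (hasDerivAt_hjRadicand_field d a b lam A hφ)
    (hasDerivAt_hjRadicand_scale d a b lam φ A) rfl hQ (hjRadicand_euler hd.ne' a b lam A hφ)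

/-- The pair
π_φ(A,φ) = e^{dA}√((d(d-1)/(κ²l²))μe^{-(d+1)A} + k((d-1)/(2l))²φ²e^{-2A} + λφ^{2(d+1)/(d-1)}),
π_A(A,φ) = -(d(d-1)/(κ²l)) e^{dA}√(1+ke^{-2A}+μe^{-(d+1)A}) + ((d-1)/2)φπ_φ(A,φ)
satisfies the integrability condition ∂π_A/∂φ = ∂π_φ/∂A on the domain where both
square-root arguments are positive (so the momenta derive from a complete integral
S(A,φ) of the minisuperspace Hamilton–Jacobi equation). -/
theorem stmt11 (d κ l lam μ k : ℝ) (hd : 1 < d) (hκ : 0 < κ) (hl : 0 < l)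
    (hlam : 0 < lam) (hk : k = 0 ∨ k = 1 ∨ k = -1)
    (πA πφ : ℝ → ℝ → ℝ)
    (hπφ : ∀ A φ : ℝ, πφ A φ = Real.exp (d * A) *
      Real.sqrt ((d * (d - 1) / (κ ^ 2 * l ^ 2)) * μ * Real.exp (-(d + 1) * A) +
        k * ((d - 1) / (2 * l)) ^ 2 * φ ^ 2 * Real.exp (-2 * A) +
        lam * φ ^ (2 * (d + 1) / (d - 1))))
    (hπA : ∀ A φ : ℝ, πA A φ = -(d * (d - 1) / (κ ^ 2 * l)) * Real.exp (d * A) *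
      Real.sqrt (1 + k * Real.exp (-2 * A) + μ * Real.exp (-(d + 1) * A)) +
      ((d - 1) / 2) * φ * πφ A φ) :
    ∀ A φ : ℝ, 0 < φ →
      0 < 1 + k * Real.exp (-2 * A) + μ * Real.exp (-(d + 1) * A) →
      0 < (d * (d - 1) / (κ ^ 2 * l ^ 2)) * μ * Real.exp (-(d + 1) * A) +
          k * ((d - 1) / (2 * l)) ^ 2 * φ ^ 2 * Real.exp (-2 * A) +
          lam * φ ^ (2 * (d + 1) / (d - 1)) →
      deriv (fun φ' => πA A φ') φ = deriv (fun A' => πφ A' φ) A :=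
  stmt11_general d κ l lam μ k hd πA πφ hπφ hπA
end

section
/- The momenta π_A, π_φ defined by π_A = -(d(d-1)/(κ²l)) e^{dA}√(1+k e^{-2A}+μ e^{-(d+1)A}) + ((d-1)/2)φ π_φ and π_φ = e^{dA}√((d(d-1)/(κ²l²))μ e^{-(d+1)A} + k((d-1)/(2l))²φ² e^{-2A} + λφ^{2(d+1)/(d-1)}) satisfy the Hamiltonian constraint H = 0, where H = (1/2){ e^{-dA}(π_φ² - (κ²/(d(d-1)))(π_A - ((d-1)/2)φπ_φ)²) + e^{dA}( d(d-1)/(κ²l²) - λφ^{2(d+1)/(d-1)} + (d(d-1)k/(κ²l²)) e^{-2A}(1 - ((d-1)κ²/(4d))φ²) ) }. -/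
open Real

/-- The momenta
π_φ = e^{dA}√((d(d-1)/(κ²l²))μe^{-(d+1)A} + k((d-1)/(2l))²φ²e^{-2A} + λφ^{2(d+1)/(d-1)}),
π_A = -(d(d-1)/(κ²l)) e^{dA}√(1+ke^{-2A}+μe^{-(d+1)A}) + ((d-1)/2)φπ_φ
satisfy the Hamiltonian constraint H = 0, where
H = (1/2){e^{-dA}(π_φ² - (κ²/(d(d-1)))(π_A - ((d-1)/2)φπ_φ)²)
  + e^{dA}(d(d-1)/(κ²l²) - λφ^{2(d+1)/(d-1)}
  + (d(d-1)k/(κ²l²))e^{-2A}(1 - ((d-1)κ²/(4d))φ²))}. -/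
theorem stmt12 (d κ l lam μ k : ℝ) (hd : 1 < d) (hκ : 0 < κ) (hl : 0 < l)
    (hlam : 0 < lam) (hk : k = 0 ∨ k = 1 ∨ k = -1) :
    ∀ A φ : ℝ, 0 < φ →
      0 < 1 + k * Real.exp (-2 * A) + μ * Real.exp (-(d + 1) * A) →
      0 < (d * (d - 1) / (κ ^ 2 * l ^ 2)) * μ * Real.exp (-(d + 1) * A) +
          k * ((d - 1) / (2 * l)) ^ 2 * φ ^ 2 * Real.exp (-2 * A) +
          lam * φ ^ (2 * (d + 1) / (d - 1)) →
      let πφ := Real.exp (d * A) *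
        Real.sqrt ((d * (d - 1) / (κ ^ 2 * l ^ 2)) * μ * Real.exp (-(d + 1) * A) +
          k * ((d - 1) / (2 * l)) ^ 2 * φ ^ 2 * Real.exp (-2 * A) +
          lam * φ ^ (2 * (d + 1) / (d - 1)))
      let πA := -(d * (d - 1) / (κ ^ 2 * l)) * Real.exp (d * A) *
        Real.sqrt (1 + k * Real.exp (-2 * A) + μ * Real.exp (-(d + 1) * A)) +
        ((d - 1) / 2) * φ * πφ
      (1 / 2) * (Real.exp (-d * A) *
          (πφ ^ 2 - (κ ^ 2 / (d * (d - 1))) * (πA - ((d - 1) / 2) * φ * πφ) ^ 2) +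
        Real.exp (d * A) * (d * (d - 1) / (κ ^ 2 * l ^ 2) -
          lam * φ ^ (2 * (d + 1) / (d - 1)) +
          (d * (d - 1) * k / (κ ^ 2 * l ^ 2)) * Real.exp (-2 * A) *
            (1 - ((d - 1) * κ ^ 2 / (4 * d)) * φ ^ 2))) = 0 := by
  intro A φ hφ h1 h2
  have hS1 := Real.sq_sqrt h1.le
  have hS2 := Real.sq_sqrt h2.le
  have hd0 : d ≠ 0 := by linarith
  have hd1 : d - 1 ≠ 0 := by linarith
  have hκ0 : κ ≠ 0 := ne_of_gt hκ
  have hl0 : l ≠ 0 := ne_of_gt hl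
  have hE : Real.exp (-d * A) * Real.exp (d * A) = 1 := by
    rw [← Real.exp_add]; ring_nf; exact Real.exp_zero
  set s1 := Real.sqrt (1 + k * Real.exp (-2 * A) + μ * Real.exp (-(d + 1) * A)) with hs1
  set s2 := Real.sqrt ((d * (d - 1) / (κ ^ 2 * l ^ 2)) * μ * Real.exp (-(d + 1) * A) +
          k * ((d - 1) / (2 * l)) ^ 2 * φ ^ 2 * Real.exp (-2 * A) +
          lam * φ ^ (2 * (d + 1) / (d - 1))) with hs2
  simp only []
  have hsq : κ ^ 2 / (d * (d - 1)) * (d * (d - 1) / (κ ^ 2 * l)) ^ 2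
      = d * (d - 1) / (κ ^ 2 * l ^ 2) := by
    field_simp
  have hc : d * (d - 1) * k / (κ ^ 2 * l ^ 2) * ((d - 1) * κ ^ 2 / (4 * d))
      = k * (d - 1) ^ 2 / (4 * l ^ 2) := by
    field_simp
  linear_combination
    (1/2) * Real.exp (-d * A) * Real.exp (d * A) ^ 2 * hS2
    - (1/2) * Real.exp (-d * A) * Real.exp (d * A) ^ 2 * (d * (d - 1) / (κ ^ 2 * l ^ 2)) * hS1
    - (1/2) * Real.exp (-d * A) * Real.exp (d * A) ^ 2 * s1 ^ 2 * hsq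
    - (1/2) * Real.exp (d * A) * (d * (d - 1) / (κ ^ 2 * l ^ 2) -
          lam * φ ^ (2 * (d + 1) / (d - 1)) +
          (d * (d - 1) * k / (κ ^ 2 * l ^ 2)) * Real.exp (-2 * A) *
            (1 - ((d - 1) * κ ^ 2 / (4 * d)) * φ ^ 2)) * hE
    - (1/2) * Real.exp (-d * A) * Real.exp (d * A) ^ 2 * φ ^ 2 * Real.exp (-2 * A) * hc
end

section
/- On the upper half-space model of hyperbolic space ℍ_{d+1} with metric ds² = (l²/z²)(dz² + Σᵢ dzᵢ²), let u(z, z⃗) = bz / (-sgn(λ) b² + (z+a)² + |z⃗ - z⃗₀|²) with a > b > 0 and λ ≠ 0. Then v = u^{-1} satisfies ∇_μ∇_ν v = (1/(d+1)) g_{μν} □_g v, i.e. the Hessian of v is pure trace. -/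
open Real

/-- Partial derivative in the z (radial) coordinate of the upper half-space. -/
noncomputable def pderivZ {d : ℕ} (f : ℝ → (Fin d → ℝ) → ℝ) (z : ℝ) (w : Fin d → ℝ) : ℝ :=
  deriv (fun t => f t w) z

/-- Partial derivative in the i-th boundary coordinate of the upper half-space. -/
noncomputable def pderivC {d : ℕ} (i : Fin d) (f : ℝ → (Fin d → ℝ) → ℝ)
    (z : ℝ) (w : Fin d → ℝ) : ℝ :=
  deriv (fun t => f z (Function.update w i t)) (w i)

/-- On the upper half-space model of ℍ_{d+1} with metric
ds² = (l²/z²)(dz² + Σᵢdzᵢ²) (Christoffel symbols Γ^z_{zz} = -1/z, Γ^z_{ij} = δ_{ij}/z,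
Γ^i_{zj} = -δ_{ij}/z), the function v = u^{-1} with
u(z,z⃗) = bz/(-sgn(λ)b² + (z+a)² + |z⃗-z⃗₀|²), a > b > 0, λ ≠ 0, has pure-trace
Hessian: ∇_μ∇_ν v = (1/(d+1)) g_{μν} □_g v.  In coordinates, the covariant Hessian
components H_{zz} = v_{zz} + v_z/z, H_{zi} = v_{zi} + v_i/z,
H_{ij} = v_{ij} - δ_{ij} v_z/z satisfy H_{μν} = (1/(d+1)) δ_{μν} S with
S = H_{zz} + Σᵢ H_{ii}. -/
theorem stmt14 (d : ℕ) (hd : 0 < d) (l a b lam : ℝ) (hl : 0 < l)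
    (hb : 0 < b) (hab : b < a) (hlam : lam ≠ 0) (w0 : Fin d → ℝ)
    (v : ℝ → (Fin d → ℝ) → ℝ)
    (hv : ∀ (z : ℝ) (w : Fin d → ℝ), v z w =
      (-(Real.sign lam) * b ^ 2 + (z + a) ^ 2 + ∑ i, (w i - w0 i) ^ 2) / (b * z)) :
    ∀ (z : ℝ), 0 < z → ∀ (w : Fin d → ℝ),
      let S := pderivZ (pderivZ v) z w + (1 / z) * pderivZ v z w +
        ∑ i, (pderivC i (pderivC i v) z w - (1 / z) * pderivZ v z w)
      (pderivZ (pderivZ v) z w + (1 / z) * pderivZ v z w = (1 / (d + 1 : ℝ)) * S) ∧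
      (∀ i : Fin d, pderivC i (pderivZ v) z w + (1 / z) * pderivC i v z w = 0) ∧
      (∀ i j : Fin d, pderivC i (pderivC j v) z w -
          (if i = j then (1 / z) * pderivZ v z w else 0) =
        (1 / (d + 1 : ℝ)) * (if i = j then S else 0)) := by
  have hb0 : b ≠ 0 := ne_of_gt hb
  set K : ℝ := -(Real.sign lam) * b ^ 2 with hK
  set Q : (Fin d → ℝ) → ℝ := fun w => ∑ i, (w i - w0 i) ^ 2 with hQ
  -- decomposition of Q under update
  have hQup : ∀ (w : Fin d → ℝ) (i : Fin d) (t : ℝ),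
      Q (Function.update w i t)
        = (t - w0 i) ^ 2 + ∑ j ∈ Finset.univ.erase i, (w j - w0 j) ^ 2 := by
    intro w i t
    simp only [hQ]
    rw [← Finset.add_sum_erase _ _ (Finset.mem_univ i)]
    congr 1
    · simp
    · exact Finset.sum_congr rfl fun j hj => by
        rw [Function.update_of_ne (Finset.ne_of_mem_erase hj)]
  -- first derivative in z
  have hdz : ∀ (z : ℝ), z ≠ 0 → ∀ (w : Fin d → ℝ),
      pderivZ v z w = 1 / b - (K + a ^ 2 + Q w) / (b * z ^ 2) := by
    intro z hz w
    have h4 : (fun t => v t w) = fun t => (K + (t + a) ^ 2 + Q w) / (b * t) := by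
      funext t; rw [hv]
    have h1 : HasDerivAt (fun t => K + (t + a) ^ 2 + Q w) (2 * (z + a)) z := by
      have := ((hasDerivAt_id z).add_const a).pow 2
      simpa using (this.const_add K).add_const (Q w)
    have h2 : HasDerivAt (fun t : ℝ => b * t) b z := by
      simpa using (hasDerivAt_id z).const_mul b
    have h3 := h1.div h2 (mul_ne_zero hb0 hz)
    rw [pderivZ, h4, HasDerivAt.deriv (f := fun t => (K + (t + a) ^ 2 + Q w) / (b * t)) h3]
    field_simp
    ring
  -- first derivative in w i
  have hdc : ∀ (z : ℝ), z ≠ 0 → ∀ (w : Fin d → ℝ) (i : Fin d),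
      pderivC i v z w = 2 * (w i - w0 i) / (b * z) := by
    intro z hz w i
    have h4 : (fun t => v z (Function.update w i t))
        = fun t => (K + (z + a) ^ 2 +
            ((t - w0 i) ^ 2 + ∑ j ∈ Finset.univ.erase i, (w j - w0 j) ^ 2)) / (b * z) := by
      funext t; rw [hv, ← hQup w i t]
    have h1 : HasDerivAt (fun t => K + (z + a) ^ 2 +
        ((t - w0 i) ^ 2 + ∑ j ∈ Finset.univ.erase i, (w j - w0 j) ^ 2))
        (2 * (w i - w0 i)) (w i) := by
      have := ((hasDerivAt_id (w i)).sub_const (w0 i)).pow 2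
      simpa using ((this.add_const (∑ j ∈ Finset.univ.erase i, (w j - w0 j) ^ 2)).const_add (K + (z + a) ^ 2))
    rw [pderivC, h4, (h1.div_const (b * z)).deriv]
  intro z hz w
  have hz0 : z ≠ 0 := ne_of_gt hz
  set M : ℝ := K + a ^ 2 + Q w with hM
  -- second derivative zz
  have hzz : pderivZ (pderivZ v) z w = 2 * M / (b * z ^ 3) := by
    have hev : (fun t => pderivZ v t w) =ᶠ[nhds z]
        (fun t => 1 / b - M / (b * t ^ 2)) := by
      filter_upwards [eventually_ne_nhds hz0] with t ht
      rw [hdz t ht w]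
    rw [show pderivZ (pderivZ v) z w = deriv (fun t => pderivZ v t w) z from rfl,
      hev.deriv_eq]
    have hden : HasDerivAt (fun t : ℝ => b * t ^ 2) (b * (2 * z)) z := by
      simpa using (hasDerivAt_pow 2 z).const_mul b
    have h1 := (hasDerivAt_const z M).div hden (mul_ne_zero hb0 (pow_ne_zero 2 hz0))
    have h2 := h1.const_sub (1 / b)
    rw [HasDerivAt.deriv (f := fun t => 1 / b - M / (b * t ^ 2)) h2]
    field_simp
    ring
  -- mixed derivative: d/dw_i of pderivZ v
  have hcz : ∀ i : Fin d, pderivC i (pderivZ v) z w = -(2 * (w i - w0 i)) / (b * z ^ 2) := by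
    intro i
    have h4 : (fun t => pderivZ v z (Function.update w i t))
        = fun t => 1 / b - (K + a ^ 2 +
            ((t - w0 i) ^ 2 + ∑ j ∈ Finset.univ.erase i, (w j - w0 j) ^ 2)) / (b * z ^ 2) := by
      funext t; rw [hdz z hz0, hQup w i t]
    have h1 : HasDerivAt (fun t => K + a ^ 2 +
        ((t - w0 i) ^ 2 + ∑ j ∈ Finset.univ.erase i, (w j - w0 j) ^ 2))
        (2 * (w i - w0 i)) (w i) := by
      have := ((hasDerivAt_id (w i)).sub_const (w0 i)).pow 2
      simpa using ((this.add_const (∑ j ∈ Finset.univ.erase i, (w j - w0 j) ^ 2)).const_add (K + a ^ 2))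
    have h2 := (h1.div_const (b * z ^ 2)).const_sub (1 / b)
    rw [pderivC, h4, h2.deriv]
    ring
  -- second derivatives in boundary coordinates
  have hcc : ∀ i j : Fin d, pderivC i (pderivC j v) z w
      = if i = j then 2 / (b * z) else 0 := by
    intro i j
    have h4 : (fun t => pderivC j v z (Function.update w i t))
        = fun t => 2 * (Function.update w i t j - w0 j) / (b * z) := by
      funext t; rw [hdc z hz0]
    by_cases hij : i = j
    · subst hij
      have h4' : (fun t => pderivC i v z (Function.update w i t))
          = fun t => 2 * (t - w0 i) / (b * z) := by
        rw [h4]; funext t; rw [Function.update_self]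
      have h1 : HasDerivAt (fun t => 2 * (t - w0 i) / (b * z)) (2 / (b * z)) (w i) := by
        have := (((hasDerivAt_id (w i)).sub_const (w0 i)).const_mul 2).div_const (b * z)
        simpa using this
      rw [pderivC, h4', h1.deriv, if_pos rfl]
    · have h4' : (fun t => pderivC j v z (Function.update w i t))
          = fun _ => 2 * (w j - w0 j) / (b * z) := by
        rw [h4]; funext t; rw [Function.update_of_ne (Ne.symm hij)]
      rw [pderivC, h4', deriv_const, if_neg hij]
  -- now assemble
  intro S
  have hvz : pderivZ v z w = 1 / b - M / (b * z ^ 2) := hdz z hz0 w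
  have hSval : S = (d + 1 : ℝ) * ((z ^ 2 + M) / (b * z ^ 3)) := by
    have hsum : ∑ i : Fin d, (pderivC i (pderivC i v) z w - (1 / z) * pderivZ v z w)
        = (d : ℝ) * (2 / (b * z) - (1 / z) * (1 / b - M / (b * z ^ 2))) := by
      rw [Finset.sum_congr rfl (fun i _ => by rw [hcc i i, if_pos rfl, hvz])]
      simp [Finset.sum_const, mul_comm]
      ring
    show pderivZ (pderivZ v) z w + (1 / z) * pderivZ v z w +
        ∑ i, (pderivC i (pderivC i v) z w - (1 / z) * pderivZ v z w) = _
    rw [hsum, hzz, hvz]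
    field_simp
    ring
  have hd1 : (d : ℝ) + 1 ≠ 0 := by positivity
  refine ⟨?_, ?_, ?_⟩
  · rw [hzz, hvz, hSval]
    field_simp
    ring
  · intro i
    rw [hcz i, hdc z hz0 w i]
    field_simp
    ring
  · intro i j
    by_cases hij : i = j
    · subst hij
      rw [hcc i i, if_pos rfl, if_pos rfl, if_pos rfl, hvz, hSval]
      field_simp
      ring
    · rw [hcc i j, if_neg hij, if_neg hij, if_neg hij]
      simp
end

section
/- Express the conformal instanton via embedding coordinates: with Y_{-1} = (l/2z)(1+z²+|z⃗|²), Y₀ = (l/2z)(1-z²-|z⃗|²), Yᵢ = (l/z) zᵢ, and Ỹ defined analogously with parameters (z̃, z̃ⁱ, l̃), the identity -Ỹ·Y + (2/(d-1)) lα = (-sgn(λ) b² + (z+a)² + |z⃗-z⃗₀|²) · (l√|λ|/((d-1) b z)) · (2/(d-1))·((d-1)/2) holds — equivalently φ^{2/(d-1)} = ((d-1)/(l√|λ|)) bz/(-sgn(λ)b² + (z+a)² + |z⃗-z⃗₀|²) equals 1/(-Ỹ·Y + (2/(d-1)) l α), where z̃ = ((d-1)/2) b l̃/√|λ|, z̃ⁱ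 = z₀ⁱ, l̃ = (2/(d-1))√(α²-λ), α = √|λ| a/b, and Ỹ·Y = -Ỹ_{-1}Y_{-1} + Ỹ₀Y₀ + Σᵢ ỸᵢYᵢ. -/
open Real

set_option maxHeartbeats 1000000

/-- The conformal instanton in embedding coordinates.  With
Y₋₁ = (l/2z)(1+z²+|z⃗|²), Y₀ = (l/2z)(1-z²-|z⃗|²), Yᵢ = (l/z)zᵢ, and Ỹ defined
analogously from (z̃, z̃ⁱ, l̃) where z̃ = ((d-1)/2) b l̃/√λ, z̃ⁱ = z₀ⁱ,
l̃ = (2/(d-1))√(α²-λ), α = √λ a/b, and Ỹ·Y = -Ỹ₋₁Y₋₁ + Ỹ₀Y₀ + ΣᵢỸᵢYᵢ, the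
instanton profile satisfies
φ^{2/(d-1)} = ((d-1)/(l√λ)) bz/(-b² + (z+a)² + |z⃗-z⃗₀|²) = 1/(-Ỹ·Y + (2/(d-1))lα). -/
theorem stmt15 (d : ℕ) (hd : 2 ≤ d) (l lam a b : ℝ) (hl : 0 < l) (hlam : 0 < lam)
    (hb : 0 < b) (hab : b < a) (z0 : Fin d → ℝ) :
    ∀ (z : ℝ), 0 < z → ∀ (w : Fin d → ℝ),
      let α := Real.sqrt lam * a / b
      let lt := (2 / ((d : ℝ) - 1)) * Real.sqrt (α ^ 2 - lam)
      let zt := (((d : ℝ) - 1) / 2) * b * lt / Real.sqrt lam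
      let Ym1 := (l / (2 * z)) * (1 + z ^ 2 + ∑ i, (w i) ^ 2)
      let Y0 := (l / (2 * z)) * (1 - z ^ 2 - ∑ i, (w i) ^ 2)
      let Yc : Fin d → ℝ := fun i => (l / z) * w i
      let Ytm1 := (lt / (2 * zt)) * (1 + zt ^ 2 + ∑ i, (z0 i) ^ 2)
      let Yt0 := (lt / (2 * zt)) * (1 - zt ^ 2 - ∑ i, (z0 i) ^ 2)
      let Ytc : Fin d → ℝ := fun i => (lt / zt) * z0 i
      let Ydot := -Ytm1 * Ym1 + Yt0 * Y0 + ∑ i, Ytc i * Yc i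
      (((d : ℝ) - 1) / (l * Real.sqrt lam)) *
          (b * z / (-b ^ 2 + (z + a) ^ 2 + ∑ i, (w i - z0 i) ^ 2)) =
        1 / (-Ydot + (2 / ((d : ℝ) - 1)) * l * α) := by
  intro z hz w
  simp only []
  have hd2 : (2:ℝ) ≤ (d:ℝ) := by exact_mod_cast hd
  set D := (d:ℝ) - 1 with hDdef
  have hD : 0 < D := by simp only [hDdef]; linarith
  set s := Real.sqrt lam with hsdef
  have hs : 0 < s := Real.sqrt_pos.mpr hlam
  have hs2 : s ^ 2 = lam := Real.sq_sqrt hlam.le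
  set A := s * a / b with hAdef
  have hAb : A * b = s * a := by rw [hAdef]; field_simp
  have hA2b : A ^ 2 * b ^ 2 = lam * a ^ 2 := by
    have := congrArg (· ^ 2) hAb
    simp only [mul_pow] at this
    rw [this, hs2]
  have hA2pos : 0 < A ^ 2 - lam := by
    have hb2 : 0 < b ^ 2 := by positivity
    have hab2 : b ^ 2 < a ^ 2 := by nlinarith
    nlinarith
  set t := Real.sqrt (A ^ 2 - lam) with htdef
  have ht : 0 < t := Real.sqrt_pos.mpr hA2pos
  have ht2 : t ^ 2 = A ^ 2 - lam := Real.sq_sqrt hA2pos.le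
  set lt := 2 / D * t with hltdef
  have hlt : 0 < lt := by positivity
  set zt := D / 2 * b * lt / s with hztdef
  have hztv : zt = b * t / s := by
    rw [hztdef, hltdef]; field_simp
  have hzt : 0 < zt := by rw [hztv]; positivity
  have hzt2 : zt ^ 2 = a ^ 2 - b ^ 2 := by
    rw [hztv, div_pow, mul_pow, hs2, ht2]
    field_simp
    linear_combination hA2b
  have e1 : lt / (2 * zt) = s / (D * b) := by
    rw [hztdef, hltdef]; field_simp
  have e2 : lt / zt = 2 * s / (D * b) := by
    rw [hztdef, hltdef]; field_simp
  rw [e1, e2, hzt2]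
  have hS : ∑ x, 2 * s / (D * b) * z0 x * (l / z * w x)
      = 2 * s / (D * b) * (l / z) * ∑ x, z0 x * w x := by
    rw [Finset.mul_sum]
    exact Finset.sum_congr rfl fun i _ => by ring
  have hsum : ∑ i, (w i - z0 i) ^ 2
      = (∑ i, (w i) ^ 2) + (∑ i, (z0 i) ^ 2) - 2 * ∑ i, z0 i * w i := by
    rw [Finset.mul_sum, ← Finset.sum_add_distrib, ← Finset.sum_sub_distrib]
    exact Finset.sum_congr rfl fun i _ => by ring
  rw [hS, hsum, hAdef]
  set S1 := ∑ i, (w i) ^ 2 with hS1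
  set S2 := ∑ i, (z0 i) ^ 2 with hS2
  set S3 := ∑ i, z0 i * w i with hS3
  have hS1n : 0 ≤ S1 := Finset.sum_nonneg fun i _ => sq_nonneg _
  have hPpos : 0 < -b ^ 2 + (z + a) ^ 2 + (S1 + S2 - 2 * S3) := by
    have h1 : 0 ≤ S1 + S2 - 2 * S3 := by
      rw [hS1, hS2, hS3, Finset.mul_sum, ← Finset.sum_add_distrib,
        ← Finset.sum_sub_distrib]
      exact Finset.sum_nonneg fun i _ => by nlinarith [sq_nonneg (w i - z0 i)]
    nlinarith
  have hQeq : -(-(s / (D * b) * (1 + (a ^ 2 - b ^ 2) + S2)) *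
        (l / (2 * z) * (1 + z ^ 2 + S1)) +
        s / (D * b) * (1 - (a ^ 2 - b ^ 2) - S2) * (l / (2 * z) * (1 - z ^ 2 - S1)) +
        2 * s / (D * b) * (l / z) * S3) + 2 / D * l * (s * a / b)
      = l * s / (D * b * z) * (-b ^ 2 + (z + a) ^ 2 + (S1 + S2 - 2 * S3)) := by
    field_simp
    ring
  rw [hQeq]
  have hPne : (-b ^ 2 + (z + a) ^ 2 + (S1 + S2 - 2 * S3)) ≠ 0 := hPpos.ne'
  field_simp
end
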